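/- arXiv:2305.16232 — 6 statements merged into one kernel-verified Lean document; each statement's English description precedes it below -/
import Mathlib

section
/- Let f ∈ Bound(k,n) and for each i ∈ ℤ let L_i ⊂ ℝ² be the closed line segment from (i,1) to (f(i),0). Then for all integers 1 ≤ i < j ≤ n, one has (L_i ∪ L_{i+n}) ∩ L_j ≠ ∅ if and only if f(i) > f(j) or f(i) < f(j) − n. Consequently the number of pairs (i,j) with 1 ≤ i < j ≤ n and (L_i ∪ L_{i+n}) ∩ L_j ≠ ∅ (the affine inversions of f) equals ℓ(f). -/
/-- A `k`-bounded affine permutation of size `n`: a bijection `f : ℤ → ℤ` with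
`f(i+n) = f(i) + n`, `i ≤ f(i) ≤ i + n` for all `i`, and `∑_{i=1}^n (f(i) - i) = n*k`. -/
structure BoundedAffinePerm (k n : ℕ) where
  toFun : ℤ → ℤ
  bijective : Function.Bijective toFun
  periodic : ∀ i : ℤ, toFun (i + (n : ℤ)) = toFun i + (n : ℤ)
  le_apply : ∀ i : ℤ, i ≤ toFun i
  apply_le : ∀ i : ℤ, toFun i ≤ i + (n : ℤ)
  sum_eq : (∑ i ∈ Finset.Icc (1 : ℤ) (n : ℤ), (toFun i - i)) = (n : ℤ) * (k : ℤ)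

namespace BoundedAffinePerm

variable {k n : ℕ}

/-- The length of a bounded affine permutation: the number of pairs `(i,j)` with
`1 ≤ i < j ≤ n` and either `f(i) > f(j)` or `f(i) < f(j) - n` (affine inversions). -/
noncomputable def length (f : BoundedAffinePerm k n) : ℕ :=
  ((Finset.Icc (1 : ℤ) (n : ℤ) ×ˢ Finset.Icc (1 : ℤ) (n : ℤ)).filter
    (fun p => p.1 < p.2 ∧
      (f.toFun p.2 < f.toFun p.1 ∨ f.toFun p.1 < f.toFun p.2 - (n : ℤ)))).card

/-- The number of fixed points of `f` in `{1, …, n}`. -/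
noncomputable def fixCount (f : BoundedAffinePerm k n) : ℕ :=
  ((Finset.Icc (1 : ℤ) (n : ℤ)).filter (fun i => f.toFun i = i)).card

/-- The crossing number of `f`: the number of pairs `(i,j) ∈ {1,…,n} × ℤ` with
`i < j`, `j < f(i)` and `f(i) < f(j)`. -/
noncomputable def crossings (f : BoundedAffinePerm k n) : ℕ :=
  ∑ i ∈ Finset.Icc (1 : ℤ) (n : ℤ),
    ((Finset.Ioo i (f.toFun i)).filter (fun j => f.toFun i < f.toFun j)).card

end BoundedAffinePerm

/-- The transposition `σ_i` of size `n`. -/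
def sigmaT (n : ℕ) (i : ℤ) : ℤ → ℤ := fun m =>
  if m % (n : ℤ) = i % (n : ℤ) then m + 1
  else if m % (n : ℤ) = (i + 1) % (n : ℤ) then m - 1
  else m

/-- The covering relation `f ⋖ g` on `Bound(k,n)`: `ℓ(g) > ℓ(f)` and `g = σ_i ∘ f`
or `g = f ∘ σ_i` for some transposition `σ_i` of size `n`. -/
def BoundedAffinePerm.Covers {k n : ℕ} (f g : BoundedAffinePerm k n) : Prop :=
  f.length < g.length ∧
    ∃ i : ℤ, g.toFun = sigmaT n i ∘ f.toFun ∨ g.toFun = f.toFun ∘ sigmaT n i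

/-! Two segments from the line `y = 1` to the line `y = 0` meet iff their endpoints come in
opposite orders on the two lines, since a common point has the same parameter on both segments.
Hence for `i < j` the strands `L i` and `L j` of an affine permutation meet iff `f j ≤ f i`, and
`L (i + n)` meets `L j` iff `f i + n ≤ f j`; injectivity of `f` makes both inequalities strict. -/

lemma segment_inter_segment_nonempty_of_le {a b c d : ℝ} (hac : a ≤ c) (hdb : d ≤ b) :
    (segment ℝ (a, (1 : ℝ)) (b, 0) ∩ segment ℝ (c, 1) (d, 0)).Nonempty := by
  rcases (show 0 ≤ (c - a) + (b - d) by linarith).eq_or_lt with hD | hD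
  · obtain rfl : a = c := by linarith
    exact ⟨(a, 1), left_mem_segment _ _ _, left_mem_segment _ _ _⟩
  · set t := (c - a) / ((c - a) + (b - d))
    have ht₀ : 0 ≤ t := div_nonneg (by linarith) hD.le
    have ht₁ : 0 ≤ 1 - t := by
      rw [sub_nonneg, div_le_one hD]
      linarith
    refine ⟨((1 - t) * a + t * b, 1 - t), ⟨1 - t, t, ht₁, ht₀, by ring, ?_⟩,
      ⟨1 - t, t, ht₁, ht₀, by ring, ?_⟩⟩
    · simp
    · have hcross : (1 - t) * (c - a) = t * (b - d) := by
        simp only [t]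
        field_simp
        ring
      simp only [Prod.smul_mk, Prod.mk_add_mk, smul_eq_mul, Prod.mk.injEq]
      constructor <;> linarith

lemma sub_mul_sub_nonpos_of_segment_inter_segment_nonempty {a b c d : ℝ}
    (h : (segment ℝ (a, (1 : ℝ)) (b, 0) ∩ segment ℝ (c, 1) (d, 0)).Nonempty) :
    (a - c) * (b - d) ≤ 0 := by
  obtain ⟨p, ⟨u, v, hu, hv, huv, rfl⟩, ⟨u', v', -, -, huv', he⟩⟩ := h
  simp only [Prod.smul_mk, Prod.mk_add_mk, smul_eq_mul, Prod.mk.injEq] at he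
  obtain ⟨he₁, he₂⟩ := he
  obtain rfl : u = u' := by linarith
  obtain rfl : v = v' := by linarith
  -- equal parameters turn the first coordinates into `u (a - c) + v (b - d) = 0`
  have hsq : (a - c) * (b - d) = -(u * (a - c) ^ 2 + v * (b - d) ^ 2) := by
    linear_combination -(a - c + b - d) * he₁ - (a - c) * (b - d) * huv
  rw [hsq, neg_nonpos]
  positivity

lemma segment_inter_segment_nonempty_iff_of_lt {a b c d : ℝ} (hac : a < c) :
    (segment ℝ (a, (1 : ℝ)) (b, 0) ∩ segment ℝ (c, 1) (d, 0)).Nonempty ↔ d ≤ b := by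
  refine ⟨fun h => ?_, segment_inter_segment_nonempty_of_le hac.le⟩
  have := sub_mul_sub_nonpos_of_segment_inter_segment_nonempty h
  nlinarith

namespace BoundedAffinePerm

variable {k n : ℕ} (f : BoundedAffinePerm k n)

def strand (i : ℤ) : Set (ℝ × ℝ) :=
  segment ℝ ((i : ℝ), (1 : ℝ)) ((f.toFun i : ℝ), (0 : ℝ))

lemma strand_inter_strand_nonempty_iff {i j : ℤ} (hij : i < j) :
    (f.strand i ∩ f.strand j).Nonempty ↔ f.toFun j < f.toFun i := by
  rw [strand, strand, segment_inter_segment_nonempty_iff_of_lt (by exact_mod_cast hij),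
    Int.cast_le, le_iff_lt_or_eq, or_iff_left]
  exact fun h => hij.ne (f.bijective.injective h).symm

lemma strand_add_inter_strand_nonempty_iff {i j : ℤ} (hji : j < i + n) :
    (f.strand (i + n) ∩ f.strand j).Nonempty ↔ f.toFun i < f.toFun j - n := by
  rw [Set.inter_comm, strand_inter_strand_nonempty_iff f hji, f.periodic]
  omega

end BoundedAffinePerm

theorem statement1 {k n : ℕ} (f : BoundedAffinePerm k n)
    (L : ℤ → Set (ℝ × ℝ))
    (hL : ∀ i : ℤ, L i = segment ℝ ((i : ℝ), (1 : ℝ)) ((f.toFun i : ℝ), (0 : ℝ))) :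
    (∀ i j : ℤ, 1 ≤ i → i < j → j ≤ (n : ℤ) →
      (((L i ∪ L (i + (n : ℤ))) ∩ L j).Nonempty ↔
        (f.toFun j < f.toFun i ∨ f.toFun i < f.toFun j - (n : ℤ)))) ∧
    {p : ℤ × ℤ | 1 ≤ p.1 ∧ p.1 < p.2 ∧ p.2 ≤ (n : ℤ) ∧
      ((L p.1 ∪ L (p.1 + (n : ℤ))) ∩ L p.2).Nonempty}.ncard = f.length := by
  obtain rfl : L = f.strand := funext hL
  have hcross : ∀ i j : ℤ, 1 ≤ i → i < j → j ≤ (n : ℤ) →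
      (((f.strand i ∪ f.strand (i + n)) ∩ f.strand j).Nonempty ↔
        (f.toFun j < f.toFun i ∨ f.toFun i < f.toFun j - n)) := by
    intro i j hi hij hj
    rw [Set.union_inter_distrib_right, Set.union_nonempty,
      f.strand_inter_strand_nonempty_iff hij, f.strand_add_inter_strand_nonempty_iff (by omega)]
  refine ⟨hcross, ?_⟩
  rw [BoundedAffinePerm.length, ← Set.ncard_coe_finset]
  congr 1
  ext ⟨i, j⟩
  simp only [Set.mem_ofPred_eq, Finset.coe_filter, Finset.mem_product, Finset.mem_Icc]
  constructor
  · rintro ⟨hi, hij, hj, hne⟩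
    exact ⟨⟨⟨hi, by omega⟩, by omega, hj⟩, hij, (hcross i j hi hij hj).mp hne⟩
  · rintro ⟨⟨⟨hi, -⟩, -, hj⟩, hij, hinv⟩
    exact ⟨hi, hij, hj, (hcross i j hi hij hj).mpr hinv⟩
end

section
/- Let f ∈ Bound(k,n). Then for every m ∈ ℤ, the set {i ∈ ℤ : i ≤ m < f(i)} is finite and has exactly k elements. -/
/-!
Write `S(m) = {i | i ≤ m < f i}` for the arcs of the juggling diagram passing over `m`. Since
`f i ≤ i + n`, `S(m)` lies in the window `(m - n, m]`, so it is finite. If `f i₀ = m + 1`, then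
`S(m + 1) ∪ {i₀}` and `S(m) ∪ {m + 1}` coincide as disjoint unions, so `#S(m)` does not depend
on `m`. Finally, counting the pairs `(i, m)` with `1 ≤ m ≤ n` and `i ≤ m < f i` once by `m` and
once by the residue of `i` modulo `n` (using `f (i - n) = f i - n`) gives
`n * #S(m) = ∑_{i=1}^n (f i - i) = n * k`.
-/

open Finset

namespace AffinePerm

variable {f : ℤ → ℤ} {n : ℕ} {m : ℤ}

noncomputable def arcsOver (f : ℤ → ℤ) (n : ℕ) (m : ℤ) : Finset ℤ :=
  (Icc (m - n + 1) m).filter (fun i => m < f i)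

theorem mem_arcsOver (hbound : ∀ i, f i ≤ i + n) {i : ℤ} :
    i ∈ arcsOver f n m ↔ i ≤ m ∧ m < f i := by
  have := hbound i
  simp only [arcsOver, mem_filter, mem_Icc]
  omega

theorem coe_arcsOver (hbound : ∀ i, f i ≤ i + n) (m : ℤ) :
    (arcsOver f n m : Set ℤ) = {i | i ≤ m ∧ m < f i} :=
  Set.ext fun _ => mem_arcsOver hbound

theorem insert_arcsOver_succ (hf : f.Injective) (hle : ∀ i, i ≤ f i)
    (hbound : ∀ i, f i ≤ i + n) {i₀ : ℤ} (hi₀ : f i₀ = m + 1) :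
    insert i₀ (arcsOver f n (m + 1)) = insert (m + 1) (arcsOver f n m) := by
  ext i
  have := hle i
  simp only [mem_insert, mem_arcsOver hbound, ← hf.eq_iff (b := i₀), hi₀]
  omega

theorem card_arcsOver_succ (hf : f.Bijective) (hle : ∀ i, i ≤ f i)
    (hbound : ∀ i, f i ≤ i + n) (m : ℤ) :
    #(arcsOver f n (m + 1)) = #(arcsOver f n m) := by
  obtain ⟨i₀, hi₀⟩ := hf.2 (m + 1)
  have hcard := congrArg card (insert_arcsOver_succ hf.1 hle hbound hi₀)
  rwa [card_insert_of_notMem, card_insert_of_notMem, add_left_inj] at hcard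
  · simp [mem_arcsOver hbound]
  · simp [mem_arcsOver hbound, hi₀]

theorem card_arcsOver_eq_card_arcsOver_zero (hf : f.Bijective) (hle : ∀ i, i ≤ f i)
    (hbound : ∀ i, f i ≤ i + n) (m : ℤ) :
    #(arcsOver f n m) = #(arcsOver f n 0) := by
  have hper : Function.Periodic (fun m => #(arcsOver f n m)) 1 :=
    card_arcsOver_succ hf hle hbound
  simpa using (hper.int_mul m).eq

theorem sum_Icc_one_sub {M : Type*} [AddCommMonoid M] (g : ℤ → M) (n : ℕ) :
    ∑ i ∈ Icc (1 - n : ℤ) n, g i = ∑ i ∈ Icc (1 : ℤ) n, (g (i - n) + g i) := by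
  have hsplit : Icc (1 - n : ℤ) n = Icc (1 - n : ℤ) 0 ∪ Icc 1 n := by
    ext i
    simp only [mem_union, mem_Icc]
    omega
  have hdisj : Disjoint (Icc (1 - n : ℤ) 0) (Icc 1 n) :=
    disjoint_left.2 fun i hi hi' => by simp only [mem_Icc] at hi hi'; omega
  have hshift : ∑ i ∈ Icc (1 : ℤ) n, g (i - n) = ∑ i ∈ Icc (1 - n : ℤ) 0, g i := by
    have hmap := map_add_right_Icc (1 : ℤ) n (-n)
    rw [← sub_eq_add_neg, ← sub_eq_add_neg, sub_self] at hmap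
    rw [← hmap, sum_map]
    rfl
  rw [sum_add_distrib, hshift, ← sum_union hdisj, ← hsplit]

theorem card_filter_Icc_sub_add_card_filter_Icc {a b : ℤ} (ha : a ∈ Icc (1 : ℤ) n)
    (hab : a ≤ b) (hba : b ≤ a + n) :
    (#{m ∈ Icc (1 : ℤ) n | a - n ≤ m ∧ m < b - n} : ℤ) + #{m ∈ Icc (1 : ℤ) n | a ≤ m ∧ m < b}
      = b - a := by
  rw [mem_Icc] at ha
  have hlow : {m ∈ Icc (1 : ℤ) n | a - n ≤ m ∧ m < b - n} = Ico 1 (b - n) := by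
    ext m
    simp only [mem_filter, mem_Icc, mem_Ico]
    omega
  have hhigh : {m ∈ Icc (1 : ℤ) n | a ≤ m ∧ m < b} = Ico a (min b (n + 1)) := by
    ext m
    simp only [mem_filter, mem_Icc, mem_Ico, lt_min_iff]
    omega
  rw [hlow, hhigh, Int.card_Ico, Int.card_Ico]
  omega

theorem sum_card_arcsOver (hle : ∀ i, i ≤ f i) (hbound : ∀ i, f i ≤ i + n)
    (hper : ∀ i, f (i + n) = f i + n) :
    ∑ m ∈ Icc (1 : ℤ) n, (#(arcsOver f n m) : ℤ) = ∑ i ∈ Icc (1 : ℤ) n, (f i - i) := by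
  have hwindow : ∀ m ∈ Icc (1 : ℤ) n,
      arcsOver f n m = {i ∈ Icc (1 - n : ℤ) n | i ≤ m ∧ m < f i} := by
    intro m hm
    ext i
    have := hbound i
    rw [mem_Icc] at hm
    rw [mem_arcsOver hbound, mem_filter, mem_Icc]
    omega
  have hper' : ∀ i, f (i - n) = f i - n := fun i => by
    rw [eq_sub_iff_add_eq, ← hper, sub_add_cancel]
  calc ∑ m ∈ Icc (1 : ℤ) n, (#(arcsOver f n m) : ℤ)
      = ∑ m ∈ Icc (1 : ℤ) n, ∑ i ∈ Icc (1 - n : ℤ) n, if i ≤ m ∧ m < f i then 1 else 0 :=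
        sum_congr rfl fun m hm => by rw [hwindow m hm, natCast_card_filter]
    _ = ∑ i ∈ Icc (1 - n : ℤ) n, (#{m ∈ Icc (1 : ℤ) n | i ≤ m ∧ m < f i} : ℤ) := by
        rw [sum_comm]
        simp only [natCast_card_filter]
    _ = ∑ i ∈ Icc (1 : ℤ) n, (f i - i) := by
        rw [sum_Icc_one_sub]
        refine sum_congr rfl fun i hi => ?_
        rw [hper']
        exact card_filter_Icc_sub_add_card_filter_Icc hi (hle i) (hbound i)

theorem mul_card_arcsOver (hf : f.Bijective) (hle : ∀ i, i ≤ f i)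
    (hbound : ∀ i, f i ≤ i + n) (hper : ∀ i, f (i + n) = f i + n) (m : ℤ) :
    (n : ℤ) * #(arcsOver f n m) = ∑ i ∈ Icc (1 : ℤ) n, (f i - i) := by
  rw [← sum_card_arcsOver hle hbound hper,
    sum_congr rfl fun m' _ => by rw [card_arcsOver_eq_card_arcsOver_zero hf hle hbound m'],
    card_arcsOver_eq_card_arcsOver_zero hf hle hbound m, sum_const, Int.card_Icc]
  simp

end AffinePerm

theorem statement4 {k n : ℕ} (hn : 0 < n) (f : BoundedAffinePerm k n) (m : ℤ) :
    {i : ℤ | i ≤ m ∧ m < f.toFun i}.Finite ∧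
    {i : ℤ | i ≤ m ∧ m < f.toFun i}.ncard = k := by
  rw [← AffinePerm.coe_arcsOver f.apply_le m, Set.ncard_coe_finset]
  refine ⟨finite_toSet _, ?_⟩
  have hmul := AffinePerm.mul_card_arcsOver f.bijective f.le_apply f.apply_le f.periodic m
  rw [f.sum_eq] at hmul
  exact_mod_cast mul_left_cancel₀ (by positivity) hmul
end

section
/- For every f ∈ Bound(k,n), one has Cr(f) = (k−1)·n + #Fix(f) − ℓ(f), where #Fix(f) is the number of fixed points of f in {1,…,n}. -/
/-!
For each `i`, injectivity of `f` splits the points `j` strictly between `i` and `f(i)` into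
crossings (`f(j) > f(i)`) and nestings (`f(j) < f(i)`); there are `f(i) - i - 1` of them unless
`f(i) = i`, so crossings plus nestings total `nk - n + #Fix(f)`. Nestings are in bijection with
the affine inversions counted by `ℓ(f)`: a nesting `(i, j)` with `j ≤ n` is an inversion
`f(j) < f(i)`, and one with `j > n` becomes, after shifting `j` down by `n`, an inversion
`f(j - n) < f(i) - n` of the pair `(j - n, i)`.
-/

namespace BoundedAffinePerm

open Finset

variable {k n : ℕ} (f : BoundedAffinePerm k n)

theorem injective : Function.Injective f.toFun := f.bijective.1

theorem apply_sub (i : ℤ) : f.toFun (i - n) = f.toFun i - n := by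
  have := f.periodic (i - n)
  rw [sub_add_cancel] at this
  omega

noncomputable def nestings : ℕ :=
  ∑ i ∈ Icc (1 : ℤ) n, ((Ioo i (f.toFun i)).filter (fun j => f.toFun j < f.toFun i)).card

theorem card_Ioo_apply (i : ℤ) :
    ((Ioo i (f.toFun i)).card : ℤ) = f.toFun i - i - 1 + if f.toFun i = i then 1 else 0 := by
  have := f.le_apply i
  rw [Int.card_Ioo]
  split_ifs <;> omega

theorem card_crossing_add_card_nesting (i : ℤ) :
    ((Ioo i (f.toFun i)).filter (fun j => f.toFun i < f.toFun j)).card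
      + ((Ioo i (f.toFun i)).filter (fun j => f.toFun j < f.toFun i)).card
      = (Ioo i (f.toFun i)).card := by
  rw [← card_filter_add_card_filter_not (s := Ioo i (f.toFun i)) (f.toFun i < f.toFun ·)]
  congr 2
  ext j
  simp only [mem_filter, and_congr_right_iff]
  intro hj
  have hji : f.toFun j ≠ f.toFun i := f.injective.ne (mem_Ioo.1 hj).1.ne'
  omega

theorem crossings_add_nestings :
    (f.crossings : ℤ) + f.nestings = n * k - n + f.fixCount := by
  have hcard : ∑ _i ∈ Icc (1 : ℤ) n, (1 : ℤ) = n := by simp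
  have hfix : ∑ i ∈ Icc (1 : ℤ) n, (if f.toFun i = i then 1 else 0 : ℤ) = f.fixCount := by
    simp only [fixCount, card_filter, Nat.cast_sum, Nat.cast_ite, Nat.cast_one, Nat.cast_zero]
  simp only [crossings, nestings, Nat.cast_sum, ← sum_add_distrib]
  simp only [← Nat.cast_add, card_crossing_add_card_nesting, card_Ioo_apply]
  rw [sum_add_distrib, sum_sub_distrib, f.sum_eq, hcard, hfix]

theorem nestings_eq_length : f.nestings = f.length := by
  rw [nestings, ← card_sigma]
  refine card_bij' (fun p _ => if p.2 ≤ n then (p.1, p.2) else (p.2 - n, p.1))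
    (fun p _ => if f.toFun p.2 < f.toFun p.1 then ⟨p.1, p.2⟩ else ⟨p.2, p.1 + n⟩)
    ?_ ?_ ?_ ?_
  · rintro ⟨i, j⟩ hp
    simp only [mem_sigma, mem_filter, mem_Ioo, mem_Icc] at hp
    have := f.le_apply j
    have := f.apply_le i
    have := f.apply_sub j
    dsimp only
    split_ifs <;> simp only [mem_filter, mem_product, mem_Icc] <;> omega
  · rintro ⟨a, b⟩ hq
    simp only [mem_filter, mem_product, mem_Icc] at hq
    have := f.le_apply a
    have := f.le_apply b
    have := f.periodic a
    dsimp only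
    split_ifs <;> simp only [mem_sigma, mem_filter, mem_Ioo, mem_Icc] <;> omega
  · rintro ⟨i, j⟩ hp
    simp only [mem_sigma, mem_filter, mem_Ioo, mem_Icc] at hp
    have := f.apply_sub j
    by_cases hj : j ≤ n
    · simp [hj, hp.2.2]
    · simp [hj, show ¬ f.toFun i < f.toFun (j - n) by omega]
  · rintro ⟨a, b⟩ hq
    simp only [mem_filter, mem_product, mem_Icc] at hq
    by_cases hba : f.toFun b < f.toFun a
    · simp [hba, hq.1.2.2]
    · simp [hba, show ¬ a + (n : ℤ) ≤ n by omega]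

end BoundedAffinePerm

theorem statement5 {k n : ℕ} (f : BoundedAffinePerm k n) :
    (f.crossings : ℤ) = ((k : ℤ) - 1) * (n : ℤ) + (f.fixCount : ℤ) - (f.length : ℤ) := by
  have h := f.crossings_add_nestings
  rw [f.nestings_eq_length] at h
  linarith
end

section
/- Let f, g ∈ Bound(k,n) with f ⋖ g. Then exactly one of the following two alternatives holds: (i) Cr(f) = Cr(g) + 1 and #Fix(f) = #Fix(g) (the juggling diagram of g has one fewer crossing, corresponding to a pinch move / saddle cobordism from Λ_g to Λ_f); or (ii) Cr(f) = Cr(g) and #Fix(g) = #Fix(f) + 1 (the diagrams have equal crossing numbers and g acquires one new fixed point). -/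
/-!
For a bounded affine permutation `f` and a position `i`, the positions `j` strictly between `i`
and `f i` split into those whose strand crosses strand `i` (`f i < f j`) and the inversions
`(i, j)` (`f j < f i`). Summing over a period gives `Cr(f) + ℓ(f) + n = n k + #Fix(f)`, so it
suffices to show that `f ⋖ g` forces `ℓ(g) = ℓ(f) + 1` and `#Fix(g) - #Fix(f) ∈ {0, 1}`.

Both are counted in a window of `n` consecutive positions chosen around the transposition.
Composing with `σ` on either side changes the set of inversions in exactly one pair (`(w, w + 1)`
for `f ∘ σ_w`, the positions of the values `v, v + 1` for `σ_v ∘ f`), so the length moves by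
`±1`, hence by `+1`. Also `f` and `g` agree off these two positions, where `f` has no fixed
point and `g` has at most one.
-/

open Finset

theorem Int.ModEq.eq_of_mem_Icc {n a i j : ℤ} (h : i ≡ j [ZMOD n])
    (hi : i ∈ Icc (a + 1) (a + n)) (hj : j ∈ Icc (a + 1) (a + n)) : i = j := by
  rw [mem_Icc] at hi hj
  have := Int.eq_zero_of_abs_lt_dvd h.dvd (abs_sub_lt_iff.2 ⟨by omega, by omega⟩)
  omega

theorem Int.not_add_one_modEq {n : ℕ} (hn : 2 ≤ n) (a : ℤ) : ¬ a + 1 ≡ a [ZMOD n] := by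
  intro h
  have := Int.le_of_dvd one_pos (by simpa using h.dvd.neg_right)
  omega

theorem Int.not_add_mul_modEq_add_one {n : ℕ} (hn : 2 ≤ n) (a t : ℤ) :
    ¬ a + t * n ≡ a + 1 [ZMOD n] := fun h =>
  Int.not_add_one_modEq hn a (h.symm.trans (Int.add_mul_emod_self_right a t n))

theorem Finset.card_filter_add_card_filter_of_iff {α : Type*} [DecidableEq α] {S T : Finset α}
    {P Q : α → Prop} [DecidablePred P] [DecidablePred Q] (hT : T ⊆ S)
    (h : ∀ x ∈ S, x ∉ T → (P x ↔ Q x)) :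
    #(S.filter P) + #(T.filter Q) = #(S.filter Q) + #(T.filter P) := by
  have split : ∀ R : α → Prop, [DecidablePred R] →
      #(S.filter R) = #((S \ T).filter R) + #(T.filter R) := fun R _ => by
    rw [← card_union_of_disjoint (disjoint_filter_filter sdiff_disjoint), ← filter_union,
      sdiff_union_of_subset hT]
  have hPQ : (S \ T).filter P = (S \ T).filter Q :=
    filter_congr fun x hx => h x (mem_sdiff.1 hx).1 (mem_sdiff.1 hx).2
  rw [split P, split Q, hPQ]
  omega

theorem Finset.sum_Icc_add_eq_of_periodic {M : Type*} [AddCancelCommMonoid M] {n : ℕ}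
    {h : ℤ → M} (hh : Function.Periodic h n) (a b : ℤ) :
    ∑ i ∈ Icc (a + 1) (a + n), h i = ∑ i ∈ Icc (b + 1) (b + n), h i := by
  have step : ∀ a : ℤ,
      ∑ i ∈ Icc (a + 1 + 1) (a + 1 + n), h i = ∑ i ∈ Icc (a + 1) (a + n), h i := by
    intro a
    have e1 : insert (a + 1 + n) (Icc (a + 1) (a + n)) = Icc (a + 1) (a + 1 + n) := by
      ext; simp only [mem_insert, mem_Icc]; omega
    have e2 : insert (a + 1) (Icc (a + 1 + 1) (a + 1 + n)) = Icc (a + 1) (a + 1 + n) := by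
      ext; simp only [mem_insert, mem_Icc]; omega
    have := congrArg (∑ i ∈ ·, h i) (e1.trans e2.symm)
    rw [sum_insert (by simp), sum_insert (by simp), hh] at this
    exact (add_left_cancel this).symm
  suffices ∀ a : ℤ,
      ∑ i ∈ Icc (a + 1) (a + n), h i = ∑ i ∈ Icc ((0 : ℤ) + 1) (0 + n), h i by
    rw [this a, this b]
  intro a
  induction a using Int.induction_on with
  | zero => rfl
  | succ i ih => rw [step, ih]
  | pred i ih => rw [← ih, ← step (-(i : ℤ) - 1), sub_add_cancel]

section sigmaT

variable {n : ℕ} {w m x y : ℤ}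

theorem sigmaT_of_modEq (h : m ≡ w [ZMOD n]) : sigmaT n w m = m + 1 := if_pos h

theorem sigmaT_of_modEq_add_one (hn : 2 ≤ n) (h : m ≡ w + 1 [ZMOD n]) :
    sigmaT n w m = m - 1 := by
  have hw : ¬ m ≡ w [ZMOD n] := fun h' => Int.not_add_one_modEq hn w (h.symm.trans h')
  exact (if_neg hw).trans (if_pos h)

theorem sigmaT_of_not_modEq (h₁ : ¬ m ≡ w [ZMOD n]) (h₂ : ¬ m ≡ w + 1 [ZMOD n]) :
    sigmaT n w m = m :=
  (if_neg h₁).trans (if_neg h₂)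

theorem sigmaT_self : sigmaT n w w = w + 1 := sigmaT_of_modEq rfl

theorem sigmaT_add_one (hn : 2 ≤ n) : sigmaT n w (w + 1) = w := by
  rw [sigmaT_of_modEq_add_one hn rfl, add_sub_cancel_right]

theorem sigmaT_sigmaT (hn : 2 ≤ n) (m : ℤ) : sigmaT n w (sigmaT n w m) = m := by
  by_cases h₁ : m ≡ w [ZMOD n]
  · rw [sigmaT_of_modEq h₁, sigmaT_of_modEq_add_one hn (h₁.add_right 1), add_sub_cancel_right]
  by_cases h₂ : m ≡ w + 1 [ZMOD n]
  · have : m - 1 ≡ w [ZMOD n] := by simpa using h₂.sub_right 1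
    rw [sigmaT_of_modEq_add_one hn h₂, sigmaT_of_modEq this, sub_add_cancel]
  · rw [sigmaT_of_not_modEq h₁ h₂, sigmaT_of_not_modEq h₁ h₂]

theorem sigmaT_eq_add_one_iff : sigmaT n w m = m + 1 ↔ m ≡ w [ZMOD n] := by
  unfold sigmaT Int.ModEq; split_ifs <;> omega

theorem sigmaT_eq_sub_one_iff (hn : 2 ≤ n) : sigmaT n w m = m - 1 ↔ m ≡ w + 1 [ZMOD n] := by
  refine ⟨fun h => ?_, sigmaT_of_modEq_add_one hn⟩
  by_contra h'
  by_cases h₁ : m ≡ w [ZMOD n]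
  · rw [sigmaT_of_modEq h₁] at h; omega
  · rw [sigmaT_of_not_modEq h₁ h'] at h; omega

theorem sigmaT_mem_Icc (hn : 2 ≤ n) {lo hi : ℤ} (hlo : ¬ lo ≡ w + 1 [ZMOD n])
    (hhi : ¬ hi ≡ w [ZMOD n]) (hm : m ∈ Icc lo hi) : sigmaT n w m ∈ Icc lo hi := by
  have h₁ : sigmaT n w m = m + 1 → m ≠ hi := fun h he =>
    hhi (he ▸ sigmaT_eq_add_one_iff.1 h)
  have h₂ : sigmaT n w m = m - 1 → m ≠ lo := fun h he =>
    hlo (he ▸ (sigmaT_eq_sub_one_iff hn).1 h)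
  rw [mem_Icc] at hm ⊢
  unfold sigmaT at h₁ h₂ ⊢
  split_ifs at h₁ h₂ ⊢ <;> omega

theorem sigmaT_lt_sigmaT (hn : 2 ≤ n) (hxy : x < y) (h : ¬ (x ≡ w [ZMOD n] ∧ y = x + 1)) :
    sigmaT n w x < sigmaT n w y := by
  have bounds : ∀ m, m - 1 ≤ sigmaT n w m ∧ sigmaT n w m ≤ m + 1 := fun m => by
    unfold sigmaT; split_ifs <;> omega
  by_contra hle
  obtain ⟨-, hx⟩ := bounds x
  obtain ⟨hy, -⟩ := bounds y
  -- `σ` moves every point by at most one, so only `y = x + 1` and `y = x + 2` can go wrong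
  obtain rfl | rfl : y = x + 1 ∨ y = x + 2 := by omega
  · have hxw : ¬ x ≡ w [ZMOD n] := fun hxw => h ⟨hxw, rfl⟩
    have hσx : sigmaT n w x ≠ x + 1 := sigmaT_eq_add_one_iff.not.2 hxw
    exact hxw (Int.ModEq.add_right_cancel' 1 ((sigmaT_eq_sub_one_iff hn).1 (by omega)))
  · have hxw : x ≡ w [ZMOD n] := sigmaT_eq_add_one_iff.1 (by omega)
    have hyw : x + 2 ≡ w + 1 [ZMOD n] := (sigmaT_eq_sub_one_iff hn).1 (by omega)
    refine Int.not_add_one_modEq hn (x + 1) ?_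
    rw [add_assoc, one_add_one_eq_two]
    exact hyw.trans (hxw.add_right 1).symm

theorem sigmaT_lt_sigmaT_iff (hn : 2 ≤ n) (hx : ¬ (x ≡ w [ZMOD n] ∧ y = x + 1))
    (hy : ¬ (y ≡ w [ZMOD n] ∧ x = y + 1)) : sigmaT n w x < sigmaT n w y ↔ x < y := by
  rcases lt_trichotomy x y with hxy | rfl | hxy
  · exact iff_of_true (sigmaT_lt_sigmaT hn hxy hx) hxy
  · simp
  · exact iff_of_false (sigmaT_lt_sigmaT hn hxy hy).not_gt hxy.not_gt

end sigmaT

/-- For bounded `F`, the bound `j ≤ a + 2 n` excludes no inversion `(i, j)`. -/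
noncomputable def windowInversions (n : ℕ) (F : ℤ → ℤ) (a : ℤ) : Finset (ℤ × ℤ) :=
  (Icc (a + 1) (a + n) ×ˢ Icc (a + 1) (a + 2 * n)).filter fun x => x.1 < x.2 ∧ F x.2 < F x.1

theorem card_windowInversions_comp_sigmaT {n : ℕ} (hn : 2 ≤ n) (F : ℤ → ℤ) (w : ℤ) :
    #(windowInversions n (F ∘ sigmaT n w) (w - 1)) + (if F (w + 1) < F w then 1 else 0)
      = #(windowInversions n F (w - 1)) + if F w < F (w + 1) then 1 else 0 := by
  set σ := sigmaT n w
  set S := Icc (w - 1 + 1) (w - 1 + n) ×ˢ Icc (w - 1 + 1) (w - 1 + 2 * n)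
  have hlo : ¬ w - 1 + 1 ≡ w + 1 [ZMOD n] := by
    simpa using Int.not_add_mul_modEq_add_one hn w 0
  have hσS : ∀ x ∈ S, (σ x.1, σ x.2) ∈ S := by
    rintro ⟨i, j⟩ hx
    rw [mem_product] at hx ⊢
    refine ⟨sigmaT_mem_Icc hn hlo ?_ hx.1, sigmaT_mem_Icc hn hlo ?_ hx.2⟩
    · simpa using Int.not_add_mul_modEq_add_one hn (w - 1) 1
    · simpa [mul_comm] using Int.not_add_mul_modEq_add_one hn (w - 1) 2
  have hrel : #(windowInversions n (F ∘ σ) (w - 1))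
      = #(S.filter fun x => σ x.1 < σ x.2 ∧ F x.2 < F x.1) := by
    apply card_nbij' (fun x => (σ x.1, σ x.2)) (fun x => (σ x.1, σ x.2))
    all_goals
      rintro ⟨i, j⟩ hx
      simp only [windowInversions, coe_filter, Set.mem_ofPred_eq, Function.comp_apply] at hx ⊢
    · exact ⟨hσS _ hx.1, by simpa only [σ, sigmaT_sigmaT hn] using hx.2⟩
    · exact ⟨hσS _ hx.1, by simpa only [σ, sigmaT_sigmaT hn] using hx.2⟩
    · simp only [σ, sigmaT_sigmaT hn]
    · simp only [σ, sigmaT_sigmaT hn]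
  have key := card_filter_add_card_filter_of_iff (S := S) (T := {(w, w + 1), (w + 1, w)})
    (P := fun x => σ x.1 < σ x.2 ∧ F x.2 < F x.1) (Q := fun x => x.1 < x.2 ∧ F x.2 < F x.1)
    (by simp only [S, insert_subset_iff, singleton_subset_iff, mem_product, mem_Icc]; omega)
    (by
      rintro ⟨i, j⟩ hx hxT
      simp only [mem_insert, mem_singleton, Prod.mk.injEq, not_or] at hxT
      rw [mem_product] at hx
      dsimp only at hx ⊢
      have hw : w ∈ Icc (w - 1 + 1) (w - 1 + n) := by simp only [mem_Icc]; omega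
      refine and_congr_left' (sigmaT_lt_sigmaT_iff hn ?_ ?_)
      · rintro ⟨hiw, rfl⟩
        exact hxT.1 ⟨hiw.eq_of_mem_Icc hx.1 hw, by rw [hiw.eq_of_mem_Icc hx.1 hw]⟩
      · rintro ⟨hjw, rfl⟩
        have hj : j ∈ Icc (w - 1 + 1) (w - 1 + n) := by
          simp only [mem_Icc] at hx ⊢; omega
        exact hxT.2 ⟨by rw [hjw.eq_of_mem_Icc hj hw], hjw.eq_of_mem_Icc hj hw⟩)
  simp only [filter_insert, filter_singleton, σ, sigmaT_self, sigmaT_add_one hn,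
    lt_add_iff_pos_right, add_lt_iff_neg_left, zero_lt_one, Int.reduceLT, true_and, false_and,
    ↓reduceIte, insert_empty_eq, apply_ite card, card_singleton, card_empty] at key
  rw [hrel, windowInversions]
  exact key

namespace BoundedAffinePerm

variable {k n : ℕ} (f : BoundedAffinePerm k n)

theorem apply_add_mul (i t : ℤ) : f.toFun (i + t * n) = f.toFun i + t * n := by
  have hp : Function.Periodic (fun i => f.toFun i - i) n := fun i => by
    simp only [f.periodic]; ring
  have := hp.int_mul t i
  simp only [Int.cast_id] at this
  linarith

theorem modEq_of_apply_modEq {i j : ℤ} (h : f.toFun i ≡ f.toFun j [ZMOD n]) :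
    i ≡ j [ZMOD n] := by
  obtain ⟨c, hc⟩ := h.dvd
  have : i + c * n = j := f.bijective.1 (by rw [apply_add_mul]; linarith)
  rw [← this]
  exact (Int.add_mul_emod_self_right i c n).symm

theorem eq_of_apply_modEq {a i j : ℤ} (h : f.toFun i ≡ f.toFun j [ZMOD n])
    (hi : i ∈ Icc (a + 1) (a + n)) (hj : j ∈ Icc (a + 1) (a + n)) : i = j :=
  (f.modEq_of_apply_modEq h).eq_of_mem_Icc hi hj

/-- Boundedness confines the second entry `j` of an inversion `(i, j)` to `(i, f i)`. -/
noncomputable def inversionCount (i : ℤ) : ℕ :=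
  #((Ioo i (f.toFun i)).filter fun j => f.toFun j < f.toFun i)

theorem inversionCount_periodic : Function.Periodic f.inversionCount n := by
  intro i
  apply card_nbij' (· - (n : ℤ)) (· + (n : ℤ))
  · intro j hj
    simp only [coe_filter, mem_Ioo, Set.mem_ofPred_eq, f.periodic, f.apply_sub] at hj ⊢
    omega
  · intro j hj
    simp only [coe_filter, mem_Ioo, Set.mem_ofPred_eq, f.periodic] at hj ⊢
    omega
  · intro j _; simp
  · intro j _; simp

theorem card_windowInversions_eq_sum (a : ℤ) :
    #(windowInversions n f.toFun a) = ∑ i ∈ Icc (a + 1) (a + n), f.inversionCount i := by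
  rw [windowInversions, card_filter, sum_product]
  refine sum_congr rfl fun i hi => ?_
  rw [← card_filter, inversionCount]
  congr 1
  ext j
  have := f.le_apply j
  have := f.apply_le i
  simp only [mem_Icc] at hi
  simp only [mem_filter, mem_Icc, mem_Ioo]
  omega

theorem fixCount_eq_card_filter (a : ℤ) :
    f.fixCount = #((Icc (a + 1) (a + n)).filter fun i => f.toFun i = i) := by
  have hper : Function.Periodic (fun i => if f.toFun i = i then 1 else 0 : ℤ → ℕ) n :=
    fun i => by simp [f.periodic]
  rw [fixCount, card_filter, card_filter, sum_Icc_add_eq_of_periodic hper a 0, zero_add,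
    zero_add]

theorem length_eq_card_windowInversions_zero :
    f.length = #(windowInversions n f.toFun 0) := by
  -- an inversion `(i, j)` with `j > n` is recorded in `length` as `(j - n, i)`
  rw [length, windowInversions]
  symm
  apply card_nbij' (fun x : ℤ × ℤ => if x.2 ≤ n then x else (x.2 - n, x.1))
    (fun x : ℤ × ℤ => if f.toFun x.2 < f.toFun x.1 then x else (x.2, x.1 + n))
  all_goals
    rintro ⟨i, j⟩ h
    simp only [coe_filter, mem_product, mem_Icc, Set.mem_ofPred_eq] at h
    dsimp only
    have := f.apply_sub j
    have := f.periodic i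
    have := f.le_apply j
    have := f.apply_le i
    split_ifs <;>
      simp only [coe_filter, mem_product, mem_Icc, Set.mem_ofPred_eq, Prod.mk.injEq,
        true_and, and_true] at * <;>
      omega

theorem card_windowInversions (a : ℤ) : #(windowInversions n f.toFun a) = f.length := by
  rw [length_eq_card_windowInversions_zero, card_windowInversions_eq_sum,
    card_windowInversions_eq_sum, sum_Icc_add_eq_of_periodic f.inversionCount_periodic a 0]

theorem length_eq_sum_inversionCount :
    f.length = ∑ i ∈ Icc 1 (n : ℤ), f.inversionCount i := by
  simpa using (f.card_windowInversions 0).symm.trans (f.card_windowInversions_eq_sum 0)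

theorem card_crossings_add_inversionCount (i : ℤ) :
    (#((Ioo i (f.toFun i)).filter fun j => f.toFun i < f.toFun j) : ℤ) + f.inversionCount i + 1
      = f.toFun i - i + if f.toFun i = i then 1 else 0 := by
  have hsplit : (Ioo i (f.toFun i)).filter (fun j => ¬ f.toFun i < f.toFun j)
      = (Ioo i (f.toFun i)).filter (fun j => f.toFun j < f.toFun i) := by
    refine filter_congr fun j hj => ?_
    have : f.toFun j ≠ f.toFun i := fun h => by
      have := f.bijective.1 h
      rw [mem_Ioo] at hj
      omega
    omega
  have hcard := card_filter_add_card_filter_not (s := Ioo i (f.toFun i))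
    (p := fun j => f.toFun i < f.toFun j)
  rw [hsplit, Int.card_Ioo] at hcard
  have := f.le_apply i
  rw [inversionCount]
  split_ifs <;> omega

theorem crossings_add_length : f.crossings + f.length + n = n * k + f.fixCount := by
  have hsum := sum_congr (s₁ := Icc (1 : ℤ) n) rfl fun i _ =>
    f.card_crossings_add_inversionCount i
  rw [sum_add_distrib, sum_add_distrib, sum_add_distrib, f.sum_eq] at hsum
  have hcr : (f.crossings : ℤ) = ∑ i ∈ Icc (1 : ℤ) n,
      (#((Ioo i (f.toFun i)).filter fun j => f.toFun i < f.toFun j) : ℤ) := by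
    rw [crossings]; push_cast; rfl
  have hlen : (f.length : ℤ) = ∑ i ∈ Icc (1 : ℤ) n, (f.inversionCount i : ℤ) := by
    rw [length_eq_sum_inversionCount]; push_cast; rfl
  have hfix : (f.fixCount : ℤ) = ∑ i ∈ Icc (1 : ℤ) n,
      if f.toFun i = i then (1 : ℤ) else 0 := by
    rw [fixCount, card_filter]; push_cast; rfl
  simp only [sum_const, Int.card_Icc, add_sub_cancel_right, Int.toNat_natCast, nsmul_eq_mul,
    mul_one, ← hcr, ← hlen, ← hfix] at hsum
  zify
  linarith

theorem length_eq_zero_of_le_one (hn : n ≤ 1) : f.length = 0 :=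
  card_eq_zero.2 <| filter_eq_empty_iff.2 fun x hx => by
    simp only [mem_product, mem_Icc] at hx
    omega

theorem card_windowInversions_sigmaT_comp (hn : 2 ≤ n) {v p q a : ℤ} (hp : f.toFun p = v)
    (hq : f.toFun q = v + 1) (hpa : p ∈ Icc (a + 1) (a + n)) (hqa : q ∈ Icc (a + 1) (a + n)) :
    #(windowInversions n (sigmaT n v ∘ f.toFun) a) + (if q < p then 1 else 0)
      = #(windowInversions n f.toFun a) + if p < q then 1 else 0 := by
  have key := card_filter_add_card_filter_of_iff
    (S := Icc (a + 1) (a + n) ×ˢ Icc (a + 1) (a + 2 * n)) (T := {(p, q), (q, p)})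
    (P := fun x => x.1 < x.2 ∧ sigmaT n v (f.toFun x.2) < sigmaT n v (f.toFun x.1))
    (Q := fun x => x.1 < x.2 ∧ f.toFun x.2 < f.toFun x.1)
    (by simp only [insert_subset_iff, singleton_subset_iff, mem_product, mem_Icc] at *; omega)
    (by
      rintro ⟨i, j⟩ hx hxT
      simp only [mem_insert, mem_singleton, Prod.mk.injEq, not_or] at hxT
      rw [mem_product] at hx
      dsimp only at hx ⊢
      -- `σ_v` only reverses the order of the values `v + t n` and `v + 1 + t n`
      refine and_congr_right' (sigmaT_lt_sigmaT_iff hn ?_ ?_)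
      · rintro ⟨hjv, hij⟩
        have hi : i = q := f.eq_of_apply_modEq (by rw [hij, hq]; exact hjv.add_right 1) hx.1 hqa
        subst hi
        exact hxT.2 ⟨rfl, f.bijective.1 (by omega)⟩
      · rintro ⟨hiv, hji⟩
        have hi : i = p := f.eq_of_apply_modEq (by rw [hp]; exact hiv) hx.1 hpa
        subst hi
        exact hxT.1 ⟨rfl, f.bijective.1 (by omega)⟩)
  simp only [filter_insert, filter_singleton, hp, hq, sigmaT_self, sigmaT_add_one hn,
    lt_add_iff_pos_right, add_lt_iff_neg_left, zero_lt_one, Int.reduceLT, and_true, and_false,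
    ↓reduceIte, insert_empty_eq, apply_ite card, card_singleton, card_empty] at key
  exact key

theorem fixCount_eq_or_eq_add_one_of_eqOn {g : BoundedAffinePerm k n} {a x y : ℤ}
    (hx : x ∈ Icc (a + 1) (a + n)) (hy : y ∈ Icc (a + 1) (a + n))
    (hagree : ∀ i ∈ Icc (a + 1) (a + n), i ≠ x → i ≠ y → g.toFun i = f.toFun i)
    (hfx : f.toFun x ≠ x) (hfy : f.toFun y ≠ y) (hgx : g.toFun x ≠ x) :
    g.fixCount = f.fixCount ∨ g.fixCount = f.fixCount + 1 := by
  have key := card_filter_add_card_filter_of_iff (S := Icc (a + 1) (a + n)) (T := {x, y})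
    (P := fun i => g.toFun i = i) (Q := fun i => f.toFun i = i)
    (insert_subset hx (singleton_subset_iff.2 hy))
    (fun i hi hiT => by
      simp only [mem_insert, mem_singleton, not_or] at hiT
      rw [hagree i hi hiT.1 hiT.2])
  have hf : ({x, y} : Finset ℤ).filter (fun i => f.toFun i = i) = ∅ :=
    filter_eq_empty_iff.2 fun i hi => by
      rcases mem_insert.1 hi with rfl | hi
      · exact hfx
      · rw [mem_singleton.1 hi]; exact hfy
  have hg : #(({x, y} : Finset ℤ).filter fun i => g.toFun i = i) ≤ 1 :=
    card_le_one.2 fun i hi j hj => by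
      simp only [mem_filter, mem_insert, mem_singleton] at hi hj
      rcases hi with ⟨rfl | rfl, hi⟩ <;> rcases hj with ⟨rfl | rfl, hj⟩ <;> simp_all
  rw [f.fixCount_eq_card_filter a, g.fixCount_eq_card_filter a]
  rw [hf, card_empty] at key
  omega

variable {f} {g : BoundedAffinePerm k n}

theorem length_eq_add_one_of_eq_comp_sigmaT (hn : 2 ≤ n) {w : ℤ}
    (hg : g.toFun = f.toFun ∘ sigmaT n w) (hlt : f.length < g.length) :
    f.toFun w < f.toFun (w + 1) ∧ g.length = f.length + 1 := by
  have key := card_windowInversions_comp_sigmaT hn f.toFun w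
  rw [← hg, g.card_windowInversions, f.card_windowInversions] at key
  have : f.toFun w ≠ f.toFun (w + 1) := fun h => by have := f.bijective.1 h; omega
  constructor <;> split_ifs at key <;> omega

theorem fixCount_eq_or_eq_add_one_of_eq_comp_sigmaT (hn : 2 ≤ n) {w : ℤ}
    (hg : g.toFun = f.toFun ∘ sigmaT n w) (hw : f.toFun w < f.toFun (w + 1)) :
    g.fixCount = f.fixCount ∨ g.fixCount = f.fixCount + 1 := by
  have hgw : g.toFun w = f.toFun (w + 1) := by rw [hg, Function.comp_apply, sigmaT_self]
  have hgw' : g.toFun (w + 1) = f.toFun w := by rw [hg, Function.comp_apply, sigmaT_add_one hn]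
  have := g.le_apply (w + 1)
  have hx : w ∈ Icc (w - 1 + 1) (w - 1 + n) := by simp only [mem_Icc]; omega
  have hy : w + 1 ∈ Icc (w - 1 + 1) (w - 1 + n) := by simp only [mem_Icc]; omega
  refine fixCount_eq_or_eq_add_one_of_eqOn f hx hy (fun i hi hiw hiw' => ?_)
    (by omega) (by omega) (by omega)
  rw [hg, Function.comp_apply, sigmaT_of_not_modEq (fun h => hiw (h.eq_of_mem_Icc hi hx))
    (fun h => hiw' (h.eq_of_mem_Icc hi hy))]

theorem mem_Icc_of_eq_sigmaT_comp (hn : 2 ≤ n) {v p q : ℤ}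
    (hg : g.toFun = sigmaT n v ∘ f.toFun) (hp : f.toFun p = v) (hq : f.toFun q = v + 1) :
    p ∈ Icc (v - n + 1) (v - n + n) ∧ q ∈ Icc (v - n + 1) (v - n + n) := by
  have hgp : g.toFun p = v + 1 := by rw [hg, Function.comp_apply, hp, sigmaT_self]
  have hgq : g.toFun q = v := by rw [hg, Function.comp_apply, hq, sigmaT_add_one hn]
  have := f.le_apply p
  have := f.apply_le q
  have := g.le_apply q
  have := g.apply_le p
  simp only [mem_Icc]
  omega

theorem length_eq_add_one_of_eq_sigmaT_comp (hn : 2 ≤ n) {v p q : ℤ}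
    (hg : g.toFun = sigmaT n v ∘ f.toFun) (hp : f.toFun p = v) (hq : f.toFun q = v + 1)
    (hlt : f.length < g.length) : p < q ∧ g.length = f.length + 1 := by
  obtain ⟨hpa, hqa⟩ := mem_Icc_of_eq_sigmaT_comp hn hg hp hq
  have key := f.card_windowInversions_sigmaT_comp hn hp hq hpa hqa
  rw [← hg, g.card_windowInversions, f.card_windowInversions] at key
  have : p ≠ q := by rintro rfl; omega
  constructor <;> split_ifs at key <;> omega

theorem fixCount_eq_or_eq_add_one_of_eq_sigmaT_comp (hn : 2 ≤ n) {v p q : ℤ}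
    (hg : g.toFun = sigmaT n v ∘ f.toFun) (hp : f.toFun p = v) (hq : f.toFun q = v + 1)
    (hpq : p < q) : g.fixCount = f.fixCount ∨ g.fixCount = f.fixCount + 1 := by
  obtain ⟨hpa, hqa⟩ := mem_Icc_of_eq_sigmaT_comp hn hg hp hq
  have hgp : g.toFun p = v + 1 := by rw [hg, Function.comp_apply, hp, sigmaT_self]
  have hgq : g.toFun q = v := by rw [hg, Function.comp_apply, hq, sigmaT_add_one hn]
  have := g.le_apply q
  refine fixCount_eq_or_eq_add_one_of_eqOn f hpa hqa (fun i hi hip hiq => ?_)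
    (by omega) (by omega) (by omega)
  rw [hg, Function.comp_apply, sigmaT_of_not_modEq
    (fun h => hip (f.eq_of_apply_modEq (hp ▸ h) hi hpa))
    (fun h => hiq (f.eq_of_apply_modEq (hq ▸ h) hi hqa))]

theorem Covers.length_eq_add_one_and_fixCount (h : f.Covers g) :
    g.length = f.length + 1 ∧ (g.fixCount = f.fixCount ∨ g.fixCount = f.fixCount + 1) := by
  obtain ⟨hlt, w, hg⟩ := h
  have hn : 2 ≤ n := by
    by_contra hn
    rw [g.length_eq_zero_of_le_one (by omega)] at hlt
    omega
  rcases hg with hg | hg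
  · obtain ⟨p, hp⟩ := f.bijective.2 w
    obtain ⟨q, hq⟩ := f.bijective.2 (w + 1)
    obtain ⟨hpq, hlen⟩ := length_eq_add_one_of_eq_sigmaT_comp hn hg hp hq hlt
    exact ⟨hlen, fixCount_eq_or_eq_add_one_of_eq_sigmaT_comp hn hg hp hq hpq⟩
  · obtain ⟨hw, hlen⟩ := length_eq_add_one_of_eq_comp_sigmaT hn hg hlt
    exact ⟨hlen, fixCount_eq_or_eq_add_one_of_eq_comp_sigmaT hn hg hw⟩

end BoundedAffinePerm

theorem statement7 {k n : ℕ} (f g : BoundedAffinePerm k n) (h : f.Covers g) :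
    Xor'
      (f.crossings = g.crossings + 1 ∧ f.fixCount = g.fixCount)
      (f.crossings = g.crossings ∧ g.fixCount = f.fixCount + 1) := by
  obtain ⟨hlen, hfix⟩ := h.length_eq_add_one_and_fixCount
  have hf := f.crossings_add_length
  have hg := g.crossings_add_length
  rcases hfix with hfix | hfix
  · exact Or.inl ⟨⟨by omega, hfix.symm⟩, by omega⟩
  · exact Or.inr ⟨⟨by omega, hfix⟩, by omega⟩
end

section
/- Let M be a k×n complex matrix of rank k. Then f_M : ℤ → ℤ is a bijection. -/
/-!
Write `v` for the periodic column sequence and `f = f_M`. Suppose `a < b` and `f a = f b = j`.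
Then `v j` lies in the span of `v (a+1), …, v (j-1)`: if `b < j`, by the exchange lemma, since
`v b` is in the span of `v (b+1), …, v j` but not of `v (b+1), …, v (j-1)`; if `b = j`, because
then `v b = 0`. Hence `v a`, which lies in the span of `v (a+1), …, v j`, already lies in that of
`v (a+1), …, v (j-1)`, contradicting the minimality of `f a`. So `f` is injective. Periodicity
gives `f (i + n) = f i + n`, so `f` induces an injective, hence bijective, self-map of `ℤ/nℤ`,
and therefore `f` is surjective.
-/

noncomputable section

/-- The `n`-periodic extension of the columns of a `k × n` complex matrix `M`:
`colext M i = M_i` for `1 ≤ i ≤ n` and `colext M (i + n) = colext M i`. -/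
def colext {k n : ℕ} (M : Matrix (Fin k) (Fin n) ℂ) (i : ℤ) : Fin k → ℂ :=
  if h : 0 < n then
    fun r => M r ⟨((i - 1) % (n : ℤ)).toNat, by
      have h0 : (0 : ℤ) < (n : ℤ) := by exact_mod_cast h
      have h1 : 0 ≤ (i - 1) % (n : ℤ) := Int.emod_nonneg _ (by omega)
      have h2 : (i - 1) % (n : ℤ) < (n : ℤ) := Int.emod_lt_of_pos _ h0
      omega⟩
  else 0

/-- `f_M(i) = min { j ≥ i | M_i ∈ span(M_{i+1}, …, M_j) }`, where the columns of `M`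
are extended `n`-periodically. -/
def fM {k n : ℕ} (M : Matrix (Fin k) (Fin n) ℂ) (i : ℤ) : ℤ :=
  sInf {j : ℤ | i ≤ j ∧ colext M i ∈ Submodule.span ℂ (colext M '' Set.Ioc i j)}

end

open Function Set Submodule

theorem Function.Injective.surjective_of_map_add {f : ℤ → ℤ} (hinj : Injective f)
    {n : ℕ} (hn : 0 < n) (hf : ∀ i, f (i + n) = f i + n) : Surjective f := by
  have hshift : ∀ i t : ℤ, f (i + t * n) = f i + t * n := by
    have hper : Periodic (fun i => f i - i) n := fun i => by
      show f (i + n) - (i + n) = f i - i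
      rw [hf]; ring
    intro i t
    have := hper.int_mul t i
    rw [Int.cast_id] at this
    linarith
  have hres : ∀ i i' : ℤ, (f i : ZMod n) = f i' → (i : ZMod n) = i' := by
    intro i i'
    simp only [ZMod.intCast_eq_intCast_iff_dvd_sub]
    rintro ⟨t, ht⟩
    have : f (i + t * n) = f i' := by rw [hshift]; linarith
    exact ⟨t, by rw [← hinj this]; ring⟩
  have : NeZero n := ⟨hn.ne'⟩
  let φ : ZMod n → ZMod n := fun x => (f (x.cast : ℤ) : ZMod n)
  have hφ : Injective φ := fun x y h => by
    simpa only [ZMod.intCast_zmod_cast] using hres _ _ h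
  intro m
  obtain ⟨x, hx⟩ := Finite.injective_iff_surjective.1 hφ (m : ZMod n)
  obtain ⟨t, ht⟩ := (ZMod.intCast_eq_intCast_iff_dvd_sub _ _ _).1 hx
  exact ⟨x.cast + t * n, by rw [hshift]; linarith⟩

theorem Function.Periodic.image_Ioc_add {α : Type*} {v : ℤ → α} {c : ℤ} (hv : Periodic v c)
    (i j : ℤ) : v '' Ioc (i + c) (j + c) = v '' Ioc i j := by
  rw [← image_add_const_Ioc, image_image]
  exact image_congr fun x _ => hv x

section NextDependence

variable (K : Type*) {V : Type*} [DivisionRing K] [AddCommGroup V] [Module K V]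

noncomputable def nextDependence (v : ℤ → V) (i : ℤ) : ℤ :=
  sInf {j : ℤ | i ≤ j ∧ v i ∈ span K (v '' Ioc i j)}

variable {K} {v : ℤ → V}

theorem nextDependence_spec {i : ℤ} (h : ∃ j, i ≤ j ∧ v i ∈ span K (v '' Ioc i j)) :
    i ≤ nextDependence K v i ∧ v i ∈ span K (v '' Ioc i (nextDependence K v i)) :=
  Int.csInf_mem h ⟨i, fun _ hj => hj.1⟩

theorem nextDependence_le {i j : ℤ} (hij : i ≤ j) (h : v i ∈ span K (v '' Ioc i j)) :
    nextDependence K v i ≤ j :=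
  csInf_le ⟨i, fun _ hj => hj.1⟩ ⟨hij, h⟩

theorem notMem_span_Ioo_nextDependence {i : ℤ} (hi : i < nextDependence K v i) :
    v i ∉ span K (v '' Ioo i (nextDependence K v i)) := by
  rw [← Ioc_sub_one_right_eq_Ioo]
  intro h
  have := nextDependence_le (by omega) h
  omega

theorem nextDependence_ne_of_lt {a b : ℤ} (hab : a < b)
    (ha : ∃ j, a ≤ j ∧ v a ∈ span K (v '' Ioc a j))
    (hb : ∃ j, b ≤ j ∧ v b ∈ span K (v '' Ioc b j)) :
    nextDependence K v a ≠ nextDependence K v b := by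
  intro hj
  obtain ⟨-, ha_mem⟩ := nextDependence_spec ha
  obtain ⟨hbj, hb_mem⟩ := nextDependence_spec hb
  have ha_not : v a ∉ span K (v '' Ioo a (nextDependence K v a)) :=
    notMem_span_Ioo_nextDependence (by omega)
  set j := nextDependence K v b
  rw [hj] at ha_mem ha_not
  have hvj : v j ∈ span K (v '' Ioo a j) := by
    rcases hbj.eq_or_lt with hbj | hbj
    · have hvb : v b = 0 := by simpa [← hbj] using hb_mem
      rw [← hbj, hvb]
      exact zero_mem _
    · rw [← Ioo_insert_right hbj, image_insert_eq] at hb_mem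
      refine span_mono ?_ (mem_span_insert_exchange hb_mem (notMem_span_Ioo_nextDependence hbj))
      rintro _ (rfl | ⟨x, hx, rfl⟩)
      · exact mem_image_of_mem v ⟨hab, hbj⟩
      · exact mem_image_of_mem v ⟨hab.trans hx.1, hx.2⟩
  rw [← Ioo_insert_right (by omega), image_insert_eq, span_insert_eq_span hvj] at ha_mem
  exact ha_not ha_mem

theorem injective_nextDependence (hv : ∀ i, ∃ j, i ≤ j ∧ v i ∈ span K (v '' Ioc i j)) :
    Injective (nextDependence K v) := by
  intro a b h
  by_contra hne
  rcases lt_or_gt_of_ne hne with hab | hab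
  · exact nextDependence_ne_of_lt hab (hv a) (hv b) h
  · exact nextDependence_ne_of_lt hab (hv b) (hv a) h.symm

theorem Function.Periodic.exists_mem_span_Ioc {c : ℤ} (hv : Periodic v c) (hc : 0 < c)
    (i : ℤ) : ∃ j, i ≤ j ∧ v i ∈ span K (v '' Ioc i j) :=
  ⟨i + c, by omega, subset_span ⟨i + c, ⟨by omega, le_rfl⟩, hv i⟩⟩

theorem nextDependence_add_period {c : ℤ} (hv : Periodic v c) (hc : 0 < c) (i : ℤ) :
    nextDependence K v (i + c) = nextDependence K v i + c := by
  have mem_iff : ∀ j, v (i + c) ∈ span K (v '' Ioc (i + c) j) ↔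
      v i ∈ span K (v '' Ioc i (j - c)) := fun j => by
    rw [hv i, ← hv.image_Ioc_add i (j - c), sub_add_cancel]
  obtain ⟨hle, hmem⟩ := nextDependence_spec (hv.exists_mem_span_Ioc (K := K) hc i)
  refine IsLeast.csInf_eq ⟨⟨by omega, by rwa [mem_iff, add_sub_cancel_right]⟩, ?_⟩
  rintro j ⟨hij, hj⟩
  have := nextDependence_le (by omega) ((mem_iff j).1 hj)
  omega

theorem bijective_nextDependence_of_periodic {p : ℕ} (hp : 0 < p)
    (hv : Periodic v p) : Bijective (nextDependence K v) := by
  have hp' : (0 : ℤ) < p := by exact_mod_cast hp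
  have hinj := injective_nextDependence (hv.exists_mem_span_Ioc (K := K) hp')
  exact ⟨hinj, hinj.surjective_of_map_add hp (nextDependence_add_period hv hp')⟩

end NextDependence

theorem periodic_colext {k n : ℕ} (M : Matrix (Fin k) (Fin n) ℂ) :
    Periodic (colext M) n := by
  intro i
  unfold colext
  split
  · funext r
    congr 2
    rw [show i + (n : ℤ) - 1 = (i - 1) + (n : ℤ) * 1 by ring, Int.add_mul_emod_self_left]
  · rfl

theorem exists_pos_periodic_colext {k n : ℕ} (M : Matrix (Fin k) (Fin n) ℂ) :
    ∃ p : ℕ, 0 < p ∧ Periodic (colext M) p := by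
  rcases Nat.eq_zero_or_pos n with hn | hn
  · exact ⟨1, one_pos, fun _ => by simp [colext, hn]⟩
  · exact ⟨n, hn, periodic_colext M⟩

theorem statement14_general {k n : ℕ} (M : Matrix (Fin k) (Fin n) ℂ) :
    Function.Bijective (fM M) := by
  show Bijective (nextDependence ℂ (colext M))
  obtain ⟨p, hp, hv⟩ := exists_pos_periodic_colext M
  exact bijective_nextDependence_of_periodic hp hv

theorem statement14 {k n : ℕ} (M : Matrix (Fin k) (Fin n) ℂ) (hM : M.rank = k) :
    Function.Bijective (fM M) :=
  statement14_general M
end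

section
/- Let M be a k×n complex matrix of rank k. Then Σ_{i=1}^n (f_M(i) − i) = nk. Consequently (combined with the bounds i ≤ f_M(i) ≤ i+n, the periodicity f_M(i+n) = f_M(i)+n, and bijectivity of f_M) the map f_M is a k-bounded affine permutation of size n, i.e. f_M ∈ Bound(k,n). -/
/-!
Write `v i` for the periodically extended columns and `f` for `f_M`. Minimality of `f i` says
that for `i ≤ t`, `t < f i` iff `v i ∉ span (v (i+1), …, v t)`. Hence, for fixed `t`, the
indices `i ∈ (t - n, t]` with `t < f i` are exactly the vectors kept by the greedy right-to-left
basis extraction from `v (t-n+1), …, v t`, whose span is `ℂᵏ`: there are `k` of them.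
Counting the pairs `(i, t)` with `i ≤ t < f i` once by `i` and once by `t` (both modulo the
period) gives `∑ (f i - i) = n k`.

For bijectivity, the exchange lemma shows that for `i < m`, `f i = m` iff each of `v i`, `v m`
lies in the span of the other together with `v (i+1), …, v (m-1)` but not in the span of these
alone. So the two endpoints play symmetric roles: `f` is injective, and the preimage of `m` is
the largest `l` with `v m ∈ span (v l, …, v (m-1))`.
-/

open Set Submodule Module Function
open scoped Finset

theorem Submodule.mem_span_insert_and_notMem_comm {K V : Type*} [DivisionRing K]
    [AddCommGroup V] [Module K V] {x y : V} {s : Set V} :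
    x ∈ span K (insert y s) ∧ x ∉ span K s ↔ y ∈ span K (insert x s) ∧ y ∉ span K s := by
  have key : ∀ {x y : V}, x ∈ span K (insert y s) ∧ x ∉ span K s →
      y ∈ span K (insert x s) ∧ y ∉ span K s := fun ⟨hx, hxs⟩ =>
    ⟨mem_span_insert_exchange hx hxs, fun hy => hxs (by rwa [span_insert_eq_span hy] at hx)⟩
  exact ⟨key, key⟩

theorem Function.Periodic.sum_range_add {M : Type*} [AddCommMonoid M] {g : ℤ → M} {n : ℕ}
    (hg : Periodic g n) (a : ℤ) :
    ∑ x ∈ Finset.range n, g (a + x) = ∑ x ∈ Finset.range n, g x := by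
  have step : ∀ a : ℤ, ∑ x ∈ Finset.range n, g (a + 1 + x) = ∑ x ∈ Finset.range n, g (a + x) := by
    intro a
    cases n with
    | zero => simp
    | succ m =>
      have hwrap : g (a + 1 + m) = g (a + (0 : ℕ)) := by
        rw [Nat.cast_zero, add_zero, ← hg a]; push_cast; ring_nf
      rw [Finset.sum_range_succ, Finset.sum_range_succ' (fun x : ℕ => g (a + x)), hwrap]
      exact congrArg (· + _) (Finset.sum_congr rfl fun x _ => by push_cast; ring_nf)
  induction a using Int.induction_on with
  | zero => simp
  | succ a ih => rw [step, ih]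
  | pred a ih => rw [← ih, ← step, sub_add_cancel]

theorem Function.Periodic.sum_Icc_add {M : Type*} [AddCommMonoid M] {g : ℤ → M} {n : ℕ}
    (hg : Periodic g n) (a : ℤ) :
    ∑ i ∈ Finset.Icc (1 : ℤ) n, g (i + a) = ∑ i ∈ Finset.Icc (1 : ℤ) n, g i := by
  simp only [Int.Icc_eq_finset_map, Finset.sum_map, Embedding.trans_apply, Nat.castEmbedding_apply,
    addLeftEmbedding_apply, add_sub_cancel_right, Int.toNat_natCast]
  rw [hg.sum_range_add, ← hg.sum_range_add (1 + a)]
  simp only [add_right_comm]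

noncomputable section

variable {K V : Type*} [DivisionRing K] [AddCommGroup V] [Module K V]

variable (K) in
def firstSpanIndex (v : ℤ → V) (i : ℤ) : ℤ :=
  sInf {j : ℤ | i ≤ j ∧ v i ∈ span K (v '' Ioc i j)}

section firstSpanIndex

variable {v : ℤ → V} {i j m t : ℤ}

local notation "f" => firstSpanIndex K v

theorem firstSpanIndex_le (hij : i ≤ j) (h : v i ∈ span K (v '' Ioc i j)) : f i ≤ j := by
  unfold firstSpanIndex
  exact csInf_le ⟨i, fun _ hj => hj.1⟩ ⟨hij, h⟩

theorem firstSpanIndex_of_eq_zero (h : v i = 0) : f i = i := by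
  refine (firstSpanIndex_le le_rfl (h ▸ zero_mem _)).antisymm ?_
  unfold firstSpanIndex
  exact le_csInf ⟨i, le_rfl, h ▸ zero_mem _⟩ fun _ hj => hj.1

variable (K) {n : ℕ}

theorem mem_span_image_Ioc_add (hv : Periodic v n) (hn : 0 < n) (i : ℤ) :
    v i ∈ span K (v '' Ioc i (i + n)) :=
  subset_span (hv.image_Ioc (by exact_mod_cast hn) i ▸ mem_range_self i)

theorem le_firstSpanIndex_and_mem_span (hv : Periodic v n) (hn : 0 < n) (i : ℤ) :
    i ≤ f i ∧ v i ∈ span K (v '' Ioc i (f i)) := by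
  unfold firstSpanIndex
  exact Int.csInf_mem (s := {j : ℤ | i ≤ j ∧ v i ∈ span K (v '' Ioc i j)})
    ⟨i + n, by omega, mem_span_image_Ioc_add K hv hn i⟩ ⟨i, fun _ hj => hj.1⟩

theorem le_firstSpanIndex (hv : Periodic v n) (hn : 0 < n) (i : ℤ) : i ≤ f i :=
  (le_firstSpanIndex_and_mem_span K hv hn i).1

theorem firstSpanIndex_le_add (hv : Periodic v n) (hn : 0 < n) (i : ℤ) : f i ≤ i + n :=
  firstSpanIndex_le (by omega) (mem_span_image_Ioc_add K hv hn i)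

theorem lt_firstSpanIndex_iff (hv : Periodic v n) (hn : 0 < n) (h : i ≤ t) :
    t < f i ↔ v i ∉ span K (v '' Ioc i t) := by
  refine ⟨fun hlt hmem => (firstSpanIndex_le h hmem).not_gt hlt, fun hnot => ?_⟩
  by_contra! hle
  exact hnot (span_mono (image_mono (Ioc_subset_Ioc_right hle))
    (le_firstSpanIndex_and_mem_span K hv hn i).2)

theorem firstSpanIndex_eq_self_iff (hv : Periodic v n) (hn : 0 < n) : f i = i ↔ v i = 0 := by
  refine ⟨fun h => ?_, firstSpanIndex_of_eq_zero⟩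
  simpa [h] using (le_firstSpanIndex_and_mem_span K hv hn i).2

theorem firstSpanIndex_eq_iff_of_lt (hv : Periodic v n) (hn : 0 < n) (h : i < m) :
    f i = m ↔ v i ∈ span K (insert (v m) (v '' Ioo i m)) ∧ v i ∉ span K (v '' Ioo i m) := by
  rw [← image_insert_eq, Ioo_insert_right h, ← Ioc_sub_one_right_eq_Ioo,
    ← lt_firstSpanIndex_iff K hv hn (by omega), ← not_not (a := v i ∈ span K (v '' Ioc i m)),
    ← lt_firstSpanIndex_iff K hv hn h.le]
  omega

theorem mem_span_image_Ioc_add_iff (hv : Periodic v n) (i j : ℤ) :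
    v (i + n) ∈ span K (v '' Ioc (i + n) (j + n)) ↔ v i ∈ span K (v '' Ioc i j) := by
  rw [← image_add_const_Ioc, image_image, hv.funext, hv]

theorem firstSpanIndex_add (hv : Periodic v n) (hn : 0 < n) (i : ℤ) : f (i + n) = f i + n := by
  obtain ⟨hle, hmem⟩ := le_firstSpanIndex_and_mem_span K hv hn i
  obtain ⟨hle', hmem'⟩ := le_firstSpanIndex_and_mem_span K hv hn (i + n)
  refine (firstSpanIndex_le (by omega) ((mem_span_image_Ioc_add_iff K hv i _).2 hmem)).antisymm ?_
  rw [← sub_add_cancel (f (i + n)) n, mem_span_image_Ioc_add_iff K hv] at hmem'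
  linarith [firstSpanIndex_le (by omega) hmem']

theorem firstSpanIndex_injective (hv : Periodic v n) (hn : 0 < n) : Injective f := by
  intro i j hij
  by_contra hne
  wlog hlt : i < j generalizing i j
  · exact this hij.symm (Ne.symm hne) (lt_of_le_of_ne (not_lt.1 hlt) (Ne.symm hne))
  obtain ⟨m, hjm⟩ : ∃ m, f j = m := ⟨_, rfl⟩
  have hj : j ≤ m := hjm ▸ le_firstSpanIndex K hv hn j
  have hm : v m ∉ span K (v '' Ioo i m) := (mem_span_insert_and_notMem_comm.1
    ((firstSpanIndex_eq_iff_of_lt K hv hn (by omega)).1 (hij.trans hjm))).2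
  rcases hj.eq_or_lt with rfl | hj
  · exact hm (((firstSpanIndex_eq_self_iff K hv hn).1 hjm) ▸ zero_mem _)
  · refine hm (span_mono ?_ (mem_span_insert_and_notMem_comm.1
      ((firstSpanIndex_eq_iff_of_lt K hv hn hj).1 hjm)).1)
    rw [← image_insert_eq]
    exact image_mono (insert_subset ⟨hlt, hj⟩ (Ioo_subset_Ioo_left hlt.le))

theorem firstSpanIndex_surjective (hv : Periodic v n) (hn : 0 < n) : Surjective f := by
  intro m
  set S := {l : ℤ | l ≤ m ∧ v m ∈ span K (v '' Ico l m)}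
  have hS : BddAbove S := ⟨m, fun _ hl => hl.1⟩
  have hmn : m - n ∈ S :=
    ⟨by omega, subset_span ⟨m - n, ⟨le_rfl, by omega⟩, by rw [← hv, sub_add_cancel]⟩⟩
  obtain ⟨him, hi⟩ : sSup S ∈ S := Int.csSup_mem ⟨_, hmn⟩ hS
  refine ⟨sSup S, ?_⟩
  rcases him.eq_or_lt with h | h
  · rw [h] at hi ⊢
    exact firstSpanIndex_of_eq_zero (by simpa using hi)
  · rw [firstSpanIndex_eq_iff_of_lt K hv hn h, mem_span_insert_and_notMem_comm]
    refine ⟨by rwa [← Ioo_insert_left h, image_insert_eq] at hi, fun hm => ?_⟩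
    have : sSup S + 1 ∈ S := ⟨h, by rwa [Ico_add_one_left_eq_Ioo]⟩
    exact (le_csSup hS this).not_gt (lt_add_one _)

open scoped Classical in
theorem card_filter_notMem_span_Ioc [Module.Finite K V] (v : ℤ → V) (t : ℤ) (d : ℕ) :
    #((Finset.range d).filter fun e : ℕ => v (t - e) ∉ span K (v '' Ioc (t - e) t)) =
      finrank K (span K (v '' Ioc (t - d) t)) := by
  induction d with
  | zero =>
    rw [Finset.range_zero, Finset.filter_empty, Finset.card_empty, Nat.cast_zero, sub_zero,
      Ioc_self, image_empty, span_empty, finrank_bot]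
  | succ d ih =>
    have hIoc : Ioc (t - (d + 1 : ℕ)) t = insert (t - d) (Ioc (t - d) t) := by
      rw [insert_Ioc_left_eq_Ioc_sub_one (by omega)]
      push_cast
      ring_nf
    rw [Finset.range_add_one, Finset.filter_insert, hIoc, image_insert_eq, span_insert, sup_comm]
    split_ifs with h
    · rw [ih, sup_eq_left.2 ((span_singleton_le_iff_mem _ _).2 h)]
    · rw [Finset.card_insert_of_notMem (by simp), ih, finrank_sup_span_singleton h]

theorem card_filter_range_lt_firstSpanIndex [Module.Finite K V] (hv : Periodic v n) (hn : 0 < n)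
    (t : ℤ) : #{d ∈ Finset.range n | t < f (t - (d : ℕ))} = finrank K (span K (range v)) := by
  classical
  rw [← hv.image_Ioc (by exact_mod_cast hn) (t - n), sub_add_cancel,
    ← card_filter_notMem_span_Ioc K v t n]
  congr 1
  exact Finset.filter_congr fun d _ => lt_firstSpanIndex_iff K hv hn (by omega)

theorem firstSpanIndex_sub_eq_card (hv : Periodic v n) (hn : 0 < n) (i : ℤ) :
    f i - i = #{d ∈ Finset.range n | i + (d : ℕ) < f i} := by
  have hle := le_firstSpanIndex K hv hn i
  have hle' := firstSpanIndex_le_add K hv hn i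
  rw [show {d ∈ Finset.range n | i + (d : ℕ) < f i} = Finset.range (f i - i).toNat by
    ext d; simp only [Finset.mem_filter, Finset.mem_range]; omega]
  simp only [Finset.card_range]
  omega

theorem sum_firstSpanIndex_sub [Module.Finite K V] (hv : Periodic v n) (hn : 0 < n) :
    ∑ i ∈ Finset.Icc (1 : ℤ) n, (f i - i) = n * finrank K (span K (range v)) := by
  have hshift (d : ℕ) : Periodic (fun i => if i + d < f i then 1 else 0 : ℤ → ℕ) n := fun i => by
    simp only [firstSpanIndex_add K hv hn, add_right_comm i (n : ℤ), add_lt_add_iff_right]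
  simp_rw [firstSpanIndex_sub_eq_card K hv hn]
  norm_cast
  calc ∑ i ∈ Finset.Icc (1 : ℤ) n, #{d ∈ Finset.range n | i + (d : ℕ) < f i}
      = ∑ d ∈ Finset.range n, ∑ i ∈ Finset.Icc (1 : ℤ) n, if i + d < f i then 1 else 0 := by
        simp_rw [Finset.card_filter]
        exact Finset.sum_comm
    _ = ∑ d ∈ Finset.range n, ∑ t ∈ Finset.Icc (1 : ℤ) n, if t < f (t - d) then 1 else 0 := by
        refine Finset.sum_congr rfl fun d _ => ?_
        rw [← (hshift d).sum_Icc_add (-d)]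
        simp only [← sub_eq_add_neg, sub_add_cancel]
    _ = ∑ t ∈ Finset.Icc (1 : ℤ) n, #{d ∈ Finset.range n | t < f (t - (d : ℕ))} := by
        simp_rw [Finset.card_filter]
        exact Finset.sum_comm
    _ = n * finrank K (span K (range v)) := by
        simp [card_filter_range_lt_firstSpanIndex K hv hn]

end firstSpanIndex

def BoundedAffinePerm.ofPeriodic [Module.Finite K V] {v : ℤ → V} {k n : ℕ} (hv : Periodic v n)
    (hn : 0 < n) (hk : finrank K (span K (range v)) = k) : BoundedAffinePerm k n where
  toFun := firstSpanIndex K v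
  bijective := ⟨firstSpanIndex_injective K hv hn, firstSpanIndex_surjective K hv hn⟩
  periodic := firstSpanIndex_add K hv hn
  le_apply := le_firstSpanIndex K hv hn
  apply_le := firstSpanIndex_le_add K hv hn
  sum_eq := hk ▸ sum_firstSpanIndex_sub K hv hn

end

section colext

variable {k n : ℕ}

theorem colext_of_width_zero (M : Matrix (Fin k) (Fin 0) ℂ) : colext M = 0 :=
  funext fun _ => dif_neg (lt_irrefl 0)

variable (M : Matrix (Fin k) (Fin n) ℂ)

theorem fM_eq_firstSpanIndex : fM M = firstSpanIndex ℂ (colext M) := rfl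

theorem colext_periodic (hn : 0 < n) : Periodic (colext M) n := fun i => by
  ext r
  simp only [colext, dif_pos hn, add_sub_right_comm, Int.add_emod_right]

theorem range_colext (hn : 0 < n) : range (colext M) = range M.col := by
  refine (range_subset_iff.2 fun i => ?_).antisymm (range_subset_iff.2 fun c => ⟨c + 1, ?_⟩)
  · unfold colext
    rw [dif_pos hn]
    exact mem_range_self _
  · unfold colext
    rw [dif_pos hn]
    ext r
    congr 2
    simp [Int.emod_eq_of_lt (Int.natCast_nonneg c) (Int.ofNat_lt.2 c.2)]

theorem finrank_span_range_colext (hn : 0 < n) :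
    finrank ℂ (span ℂ (range (colext M))) = M.rank := by
  rw [range_colext M hn, Matrix.rank_eq_finrank_span_cols]

end colext

theorem statement15 {k n : ℕ} (M : Matrix (Fin k) (Fin n) ℂ) (hM : M.rank = k) :
    (∑ i ∈ Finset.Icc (1 : ℤ) (n : ℤ), (fM M i - i)) = (n : ℤ) * (k : ℤ) ∧
    ∃ F : BoundedAffinePerm k n, F.toFun = fM M := by
  rw [fM_eq_firstSpanIndex]
  rcases Nat.eq_zero_or_pos n with rfl | hn
  · have hid : firstSpanIndex ℂ (colext M) = id :=
      funext fun i => firstSpanIndex_of_eq_zero (congrFun (colext_of_width_zero M) i)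
    refine ⟨by simp, ⟨firstSpanIndex ℂ (colext M), ?_, ?_, ?_, ?_, by simp⟩, rfl⟩ <;>
      simp [hid, Function.bijective_id]
  · let F : BoundedAffinePerm k n := .ofPeriodic (colext_periodic M hn) hn
      ((finrank_span_range_colext M hn).trans hM)
    exact ⟨F.sum_eq, F, rfl⟩
end
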